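/- Let a, b ∈ ℂ with b not a nonpositive integer, and s ∈ ℂ. For u_n(z) = ₁F₁(a+n; b; sz), the following four-term identity holds as formal power series for n ≥ 1: s·z²·u_n'(z) = (a+n)[(a+n+1)u_{n+2}(z) + (b − 3(a+n) − 2)u_{n+1}(z) + (3(a+n) − 2b + 1)u_n(z) + (b − (a+n))u_{n−1}(z)]. -/

import Mathlib

open PowerSeries

/-- Pochhammer symbol `(a)_k = a (a+1) ⋯ (a+k−1)` in `ℂ`. -/
noncomputable def poch (a : ℂ) (k : ℕ) : ℂ := (ascPochhammer ℂ k).eval a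

/-- Kummer confluent hypergeometric series `₁F₁(a;b;sz)` as a formal power series in `z`. -/
noncomputable def F1 (a b s : ℂ) : PowerSeries ℂ :=
  PowerSeries.mk fun k => poch a k / poch b k * s ^ k / (k.factorial : ℂ)

/-- Formal derivative of a power series. -/
noncomputable def D (f : PowerSeries ℂ) : PowerSeries ℂ := f.derivativeFun

/-!
With `u_A = ₁F₁(A; b; sz)`, comparing coefficients gives two first-order relations:
`z u_A' = A (u_{A+1} - u_A)` and the contiguous relation
`s z u_A = A u_{A+1} + (b - 2A) u_A + (A - b) u_{A-1}`.
Then `s z² u_A' = A (s z u_{A+1} - s z u_A)`, and expanding both terms by the contiguous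
relation gives the four-term identity with `A = a + n`.
-/

lemma poch_zero (c : ℂ) : poch c 0 = 1 := by simp [poch]

lemma poch_succ_right (c : ℂ) (k : ℕ) : poch c (k + 1) = poch c k * (c + k) := by
  simp [poch, ascPochhammer_succ_right]

lemma poch_succ_left (c : ℂ) (k : ℕ) : poch c (k + 1) = c * poch (c + 1) k := by
  simp [poch, ascPochhammer_succ_left, Polynomial.eval_comp]

lemma mul_poch_add_one (A : ℂ) (k : ℕ) : A * poch (A + 1) k = poch A k * (A + k) := by
  rw [← poch_succ_left, poch_succ_right]

lemma poch_ne_zero {b : ℂ} (hb : ∀ k : ℕ, b + k ≠ 0) (k : ℕ) : poch b k ≠ 0 := by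
  induction k with
  | zero => simp [poch_zero]
  | succ k ih => rw [poch_succ_right]; exact mul_ne_zero ih (hb k)

lemma poch_contiguous (A b : ℂ) (k : ℕ) :
    A * poch (A + 1) (k + 1) + (b - 2 * A) * poch A (k + 1) + (A - b) * poch (A - 1) (k + 1)
      = (k + 1) * (b + k) * poch A k := by
  have hAm : poch (A - 1) (k + 1) = (A - 1) * poch A k := by
    rw [poch_succ_left, sub_add_cancel]
  rw [poch_succ_right (A + 1), poch_succ_right A, hAm]
  linear_combination (A + 1 + k) * mul_poch_add_one A k

lemma coeff_X_mul_D (f : PowerSeries ℂ) (k : ℕ) : coeff k (X * D f) = k * coeff k f := by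
  cases k with
  | zero => simp
  | succ k =>
    rw [coeff_succ_X_mul]
    exact (coeff_derivative f k).trans (by push_cast; ring)

lemma coeff_F1 (A b s : ℂ) (k : ℕ) :
    coeff k (F1 A b s) = poch A k / poch b k * s ^ k / (k.factorial : ℂ) :=
  coeff_mk _ _

lemma X_mul_D_F1 (A b s : ℂ) : X * D (F1 A b s) = C A * (F1 (A + 1) b s - F1 A b s) := by
  ext k
  simp only [coeff_X_mul_D, coeff_C_mul, map_sub, coeff_F1]
  linear_combination (-(s ^ k / poch b k / (k.factorial : ℂ))) * mul_poch_add_one A k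

lemma C_mul_X_mul_F1 (A b s : ℂ) (hb : ∀ k : ℕ, b + k ≠ 0) :
    C s * X * F1 A b s
      = C A * F1 (A + 1) b s + C (b - 2 * A) * F1 A b s + C (A - b) * F1 (A - 1) b s := by
  ext k
  simp only [map_add, coeff_C_mul, mul_assoc, coeff_F1]
  cases k with
  | zero => simp only [coeff_zero_X_mul, poch_zero]; ring
  | succ k =>
    have hpoch := poch_ne_zero hb k
    have hbk := hb k
    have hfac : (k.factorial : ℂ) ≠ 0 := Nat.cast_ne_zero.2 k.factorial_ne_zero
    rw [coeff_succ_X_mul, coeff_F1, poch_succ_right b, Nat.factorial_succ]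
    push_cast
    field_simp
    linear_combination (-s ^ (k + 1)) * poch_contiguous A b k

lemma C_mul_X_sq_mul_D_F1 (A b s : ℂ) (hb : ∀ k : ℕ, b + k ≠ 0) :
    C s * X ^ 2 * D (F1 A b s)
      = C A * (C (A + 1) * F1 (A + 2) b s + C (b - 3 * A - 2) * F1 (A + 1) b s
          + C (3 * A - 2 * b + 1) * F1 A b s + C (b - A) * F1 (A - 1) b s) := by
  have hA₁ := C_mul_X_mul_F1 (A + 1) b s hb
  rw [add_assoc A 1 1, one_add_one_eq_two, add_sub_cancel_right] at hA₁
  linear_combination (norm := skip)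
    C s * X * X_mul_D_F1 A b s + C A * hA₁ - C A * C_mul_X_mul_F1 A b s hb
  simp only [map_add, map_sub, map_mul, map_one, map_ofNat]
  ring

theorem stmt_14 (a b s : ℂ) (hb : ∀ k : ℕ, b + k ≠ 0) :
    ∀ n : ℕ, 1 ≤ n →
      PowerSeries.C s * (X : PowerSeries ℂ) ^ 2 * D (F1 (a + n) b s)
        = PowerSeries.C (a + n) *
            (PowerSeries.C (a + n + 1) * F1 (a + (n + 2 : ℕ)) b s
              + PowerSeries.C (b - 3 * (a + n) - 2) * F1 (a + (n + 1 : ℕ)) b s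
              + PowerSeries.C (3 * (a + n) - 2 * b + 1) * F1 (a + n) b s
              + PowerSeries.C (b - (a + n)) * F1 (a + (n - 1 : ℕ)) b s) := by
  intro n hn
  have h₂ : a + ((n + 2 : ℕ) : ℂ) = a + n + 2 := by push_cast; ring
  have h₁ : a + ((n + 1 : ℕ) : ℂ) = a + n + 1 := by push_cast; ring
  have h₀ : a + ((n - 1 : ℕ) : ℂ) = a + n - 1 := by rw [Nat.cast_sub hn]; push_cast; ring
  rw [h₂, h₁, h₀]
  exact C_mul_X_sq_mul_D_F1 (a + n) b s hb
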